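/- arXiv:2202.06362 — 3 statements merged into one kernel-verified Lean document; each statement's English description precedes it below -/
import Mathlib

section
/- If a permutation w of {1,…,n} avoids the pattern 2143 (i.e., w is vexillary), then any two boxes of its essential set are comparable in the northeast–southwest order: for all (a,b), (c,d) ∈ E(w), either (a ≤ c and b ≥ d) or (a ≥ c and b ≤ d). -/
/-- `w` contains the pattern `p` if there are indices `i₁ < … < i_k` such that
`w i_a < w i_b ↔ p a < p b` for all `a, b`. -/
def ContainsPattern {n k : ℕ} (w : Equiv.Perm (Fin n)) (p : Equiv.Perm (Fin k)) : Prop :=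
  ∃ f : Fin k → Fin n, StrictMono f ∧ ∀ a b : Fin k, w (f a) < w (f b) ↔ p a < p b

/-- `w` avoids the pattern `p` if it does not contain it. -/
def AvoidsPattern {n k : ℕ} (w : Equiv.Perm (Fin n)) (p : Equiv.Perm (Fin k)) : Prop :=
  ¬ ContainsPattern w p

/-- The pattern `2143` (in one-line notation, written 0-based as `1,0,3,2`). -/
def pattern2143 : Equiv.Perm (Fin 4) :=
  ⟨![1, 0, 3, 2], ![1, 0, 3, 2], by decide, by decide⟩

/-- `(i,j)` (given as natural numbers) lies in the Rothe diagram `D(w)`, i.e. `i, j` are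
in range and `w i > j` and `w⁻¹ j > i`. -/
def InRothe {n : ℕ} (w : Equiv.Perm (Fin n)) (i j : ℕ) : Prop :=
  ∃ (hi : i < n) (hj : j < n), j < (w ⟨i, hi⟩ : ℕ) ∧ i < (w⁻¹ ⟨j, hj⟩ : ℕ)

/-- `(i,j)` lies in the essential set `E(w)`: it is in `D(w)` but neither `(i+1,j)`
nor `(i,j+1)` is. -/
def InEssential {n : ℕ} (w : Equiv.Perm (Fin n)) (i j : ℕ) : Prop :=
  InRothe w i j ∧ ¬ InRothe w (i + 1) j ∧ ¬ InRothe w i (j + 1)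

/-! If two essential boxes `(a,b)` and `(c,d)` had `a < c` and `b < d`, then the positions
`w⁻¹ (b+1) < a+1 < c < w⁻¹ d` would carry the values `b+1, w (a+1), w c, d`, which form a
`2143`: `w (a+1) ≤ b` and `w⁻¹ (b+1) ≤ a` because `(a,b)` is essential, while `d < w c` and
`c < w⁻¹ d` because `(c,d)` lies in the diagram. -/

section

variable {n : ℕ} {w : Equiv.Perm (Fin n)} {i j : ℕ}

theorem containsPattern_pattern2143_of_lt {p₀ p₁ p₂ p₃ : Fin n} (h₀₁ : p₀ < p₁) (h₁₂ : p₁ < p₂)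
    (h₂₃ : p₂ < p₃) (hv₁₀ : w p₁ < w p₀) (hv₀₃ : w p₀ < w p₃) (hv₃₂ : w p₃ < w p₂) :
    ContainsPattern w pattern2143 := by
  refine ⟨![p₀, p₁, p₂, p₃], Fin.strictMono_iff_lt_succ.2 ?_, ?_⟩
  · intro k
    fin_cases k <;> simpa
  · intro a b
    fin_cases a <;> fin_cases b <;> simp only [pattern2143, Equiv.coe_fn_mk,
      Fin.reduceFinMk, Matrix.cons_val, Matrix.cons_val_zero, Fin.reduceLT, iff_true, iff_false] <;>
      order

theorem inRothe_inv_iff : InRothe w⁻¹ j i ↔ InRothe w i j := by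
  simp only [InRothe, inv_inv]
  exact ⟨fun ⟨hj, hi, h₁, h₂⟩ => ⟨hi, hj, h₂, h₁⟩, fun ⟨hi, hj, h₁, h₂⟩ => ⟨hj, hi, h₂, h₁⟩⟩

theorem InRothe.apply_succ_le (h : InRothe w i j) (h' : ¬ InRothe w (i + 1) j) :
    ∃ hi : i + 1 < n, (w ⟨i + 1, hi⟩ : ℕ) ≤ j := by
  obtain ⟨-, hj, -, hij⟩ := h
  have hi : i + 1 < n := lt_of_le_of_lt hij (w⁻¹ ⟨j, hj⟩).isLt
  refine ⟨hi, not_lt.1 fun hlt => h' ⟨hi, hj, hlt, ?_⟩⟩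
  have hne : (w⁻¹ ⟨j, hj⟩ : ℕ) ≠ i + 1 := fun he => by
    rw [← show w⁻¹ ⟨j, hj⟩ = ⟨i + 1, hi⟩ from Fin.ext he] at hlt
    simp at hlt
  omega

theorem InRothe.inv_apply_succ_le (h : InRothe w i j) (h' : ¬ InRothe w i (j + 1)) :
    ∃ hj : j + 1 < n, (w⁻¹ ⟨j + 1, hj⟩ : ℕ) ≤ i :=
  (inRothe_inv_iff.2 h).apply_succ_le (mt inRothe_inv_iff.1 h')

theorem containsPattern_pattern2143_of_inEssential_of_lt {a b c d : ℕ}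
    (hab : InEssential w a b) (hcd : InEssential w c d) (hac : a < c) (hbd : b < d) :
    ContainsPattern w pattern2143 := by
  obtain ⟨hab, hrow, hcol⟩ := hab
  obtain ⟨ha₁, hwa₁⟩ := hab.apply_succ_le hrow
  obtain ⟨hb₁, hwb₁⟩ := hab.inv_apply_succ_le hcol
  obtain ⟨⟨hc, hd, hdc, hcd⟩, -⟩ := hcd
  have hv₀ : (w (w⁻¹ ⟨b + 1, hb₁⟩) : ℕ) = b + 1 := by simp
  have hv₃ : (w (w⁻¹ ⟨d, hd⟩) : ℕ) = d := by simp
  have hbd₁ : b + 1 ≠ d := by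
    rintro rfl
    omega
  have hac₁ : a + 1 ≠ c := by
    rintro rfl
    omega
  refine containsPattern_pattern2143_of_lt (p₀ := w⁻¹ ⟨b + 1, hb₁⟩) (p₁ := ⟨a + 1, ha₁⟩)
    (p₂ := ⟨c, hc⟩) ?_ ?_ hcd ?_ ?_ ?_ <;> simp only [Fin.lt_def] at * <;> omega

end

/-- If `w` avoids `2143` (is vexillary), then any two boxes of its essential set are
comparable in the northeast–southwest order. -/
theorem essential_comparable_of_vexillary {n : ℕ} (w : Equiv.Perm (Fin n))
    (hw : AvoidsPattern w pattern2143) :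
    ∀ a b c d : ℕ, InEssential w a b → InEssential w c d →
      (a ≤ c ∧ d ≤ b) ∨ (c ≤ a ∧ b ≤ d) := by
  intro a b c d hab hcd
  by_contra
  obtain ⟨hac, hbd⟩ | ⟨hca, hdb⟩ : (a < c ∧ b < d) ∨ (c < a ∧ d < b) := by omega
  · exact hw (containsPattern_pattern2143_of_inEssential_of_lt hab hcd hac hbd)
  · exact hw (containsPattern_pattern2143_of_inEssential_of_lt hcd hab hca hdb)
end

section
/- For j ≥ 1 and n = 3j−1, the permutation u of {1,…,n} defined by u(m) = m for 1 ≤ m ≤ j−1, u(j−1+2k−1) = 2j−1+k for 1 ≤ k ≤ j, and u(j−1+2k) = j−1+k for 1 ≤ k ≤ j, avoids the pattern 2143, and its code has nonzero entries exactly c_{j−2+2k} = j+1−k for k = 1, …, j; in particular its sorted code is the staircase partition (j, j−1, …, 1) and ℓ(u) = j(j+1)/2. -/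
open Finset

/-- The Coxeter length (number of inversions) of a permutation of `Fin n`. -/
def permLength {n : ℕ} (w : Equiv.Perm (Fin n)) : ℕ :=
  ((univ : Finset (Fin n × Fin n)).filter (fun p => p.1 < p.2 ∧ w p.2 < w p.1)).card

/-- The code of `w`: `c i` is the number of `j > i` with `w j < w i`. -/
def permCode {n : ℕ} (w : Equiv.Perm (Fin n)) (i : Fin n) : ℕ :=
  ((univ : Finset (Fin n)).filter (fun j => i < j ∧ w j < w i)).card

/-- The sorted (weakly decreasing) code of `w`, i.e. the partition `λ(w)`. -/
def sortedCode {n : ℕ} (w : Equiv.Perm (Fin n)) : List ℕ :=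
  (List.ofFn (permCode w)).mergeSort (fun a b => b ≤ a)

/-!
Number the positions from `0`. Besides the fixed points `0, …, j - 2`, the permutation `u` interleaves
the large values `2j - 2 + k` (at the positions `j - 3 + 2k`) with the small values `j - 2 + k` (at the
positions `j - 2 + 2k`). Hence `(a, b)` is an inversion exactly when `a` carries the `k`-th large
value and `b` the `k'`-th small one with `k ≤ k'`. Everything else follows from this description of
the inversion set: the `k`-th large value has `j + 1 - k` inversions, no other position has any, and
two inversions `(a, b)`, `(c, d)` with `b < c` always make `(a, d)` an inversion, which rules out
`2143`.
-/

/-- `(a, b)` is the pair of positions of the `k`-th large and the `k'`-th small value, `k ≤ k'`. -/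
def IsStairInversion (j a b : ℕ) : Prop :=
  ∃ k k', 1 ≤ k ∧ k ≤ k' ∧ k' ≤ j ∧ a + 3 = j + 2 * k ∧ b + 2 = j + 2 * k'

lemma permLength_eq_sum_permCode {n : ℕ} (w : Equiv.Perm (Fin n)) :
    permLength w = ∑ i, permCode w i := by
  simp only [permLength, permCode, card_filter, Fintype.sum_prod_type]

lemma sortedCode_eq_of_perm {n : ℕ} {w : Equiv.Perm (Fin n)} {l : List ℕ}
    (hperm : (List.ofFn (permCode w)).Perm l) (hl : l.Pairwise (· ≥ ·)) : sortedCode w = l :=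
  ((List.mergeSort_perm _ _).trans hperm).eq_of_pairwise' (List.pairwise_mergeSort' _ _) hl

lemma sum_range_tsub_of_le {j n : ℕ} (hjn : j ≤ n) :
    ∑ i ∈ range n, (j - i) = j * (j + 1) / 2 := by
  have htail : ∑ i ∈ range n, (j - i) = ∑ i ∈ range j, (j - i) :=
    (sum_subset (range_subset_range.mpr hjn)
      (fun i _ hi => by rw [mem_range] at hi; omega)).symm
  have hreflect : ∑ i ∈ range j, (j - i) = ∑ i ∈ range j, (i + 1) := by
    rw [← sum_range_reflect]
    exact sum_congr rfl fun i hi => by rw [mem_range] at hi; omega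
  have hshift : ∑ i ∈ range j, (i + 1) = ∑ i ∈ range (j + 1), i := by rw [sum_range_succ', add_zero]
  rw [htail, hreflect, hshift, sum_range_id, Nat.add_sub_cancel, Nat.mul_comm]

section StairInversions

variable {j n : ℕ} {w : Equiv.Perm (Fin n)}
  (hw : ∀ a b : Fin n, a < b ∧ w b < w a ↔ IsStairInversion j a b)
include hw

lemma avoidsPattern_2143_of_stairInversion : AvoidsPattern w pattern2143 := by
  rintro ⟨f, hf, hpat⟩
  obtain ⟨k, k', hk, hkk', -, hf0, hf1⟩ :=
    (hw (f 0) (f 1)).mp ⟨hf (by decide), (hpat 1 0).mpr (by decide)⟩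
  obtain ⟨l, l', -, hl, hl', hf2, hf3⟩ :=
    (hw (f 2) (f 3)).mp ⟨hf (by decide), (hpat 3 2).mpr (by decide)⟩
  have h12 : (f 1 : ℕ) < f 2 := hf (by decide : (1 : Fin 4) < 2)
  have h03 : IsStairInversion j (f 0) (f 3) := ⟨k, l', hk, by omega, hl', hf0, hf3⟩
  exact absurd ((hpat 0 3).mpr (by decide)) ((hw _ _).mpr h03).2.asymm

lemma permCode_eq_zero_of_stairInversion {i : Fin n}
    (hi : ∀ k, 1 ≤ k → k ≤ j → (i : ℕ) + 3 ≠ j + 2 * k) : permCode w i = 0 := by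
  rw [permCode, card_eq_zero, filter_eq_empty_iff]
  intro b _ hib
  obtain ⟨k, k', hk, hkk', hk'j, hik, -⟩ := (hw i b).mp hib
  exact hi k hk (by omega) hik

lemma permCode_eq_of_stairInversion (hn : n = 3 * j - 1) {k : ℕ} (hk : 1 ≤ k)
    {i : Fin n} (hi : (i : ℕ) + 3 = j + 2 * k) : permCode w i = j + 1 - k := by
  classical
  rw [permCode, filter_congr fun b _ => hw i b, ← Nat.card_Icc k j]
  symm
  refine card_bij (fun k' hk' => ⟨j + 2 * k' - 2, by rw [mem_Icc] at hk'; omega⟩) ?_ ?_ ?_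
  · intro k' hk'
    rw [mem_Icc] at hk'
    exact mem_filter.mpr ⟨mem_univ _, k, k', hk, hk'.1, hk'.2, hi, by dsimp only; omega⟩
  · intro k₁ hk₁ k₂ hk₂ h
    rw [mem_Icc] at hk₁ hk₂
    rw [Fin.mk.injEq] at h
    omega
  · intro b hb
    obtain ⟨k₀, k', -, hk₀k', hk'j, hik₀, hbk'⟩ := (mem_filter.mp hb).2
    exact ⟨k', mem_Icc.mpr ⟨by omega, hk'j⟩, Fin.ext (by dsimp only; omega)⟩

end StairInversions

/-- Sends `i < j` to the position of the `(i + 1)`-st large value and lists the remaining positions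
in increasing order, so that the code of the staircase permutation becomes `i ↦ j - i`. -/
def stairReindex {j n : ℕ} (hn : n = 3 * j - 1) (i : Fin n) : Fin n :=
  if hij : (i : ℕ) < j then ⟨j + 2 * i - 1, by omega⟩
  else if (i : ℕ) < 2 * j - 1 then ⟨i - j, by omega⟩
  else ⟨2 * i + 2 - 3 * j, by omega⟩

lemma stairReindex_injective {j n : ℕ} (hn : n = 3 * j - 1) :
    Function.Injective (stairReindex hn) := by
  intro a b hab
  unfold stairReindex at hab
  split_ifs at hab <;> rw [Fin.mk.injEq] at hab <;> exact Fin.ext (by omega)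

lemma ofFn_permCode_perm_of_stairInversion {j n : ℕ} {w : Equiv.Perm (Fin n)}
    (hw : ∀ a b : Fin n, a < b ∧ w b < w a ↔ IsStairInversion j a b) (hn : n = 3 * j - 1) :
    (List.ofFn (permCode w)).Perm (List.ofFn fun i : Fin n => j - (i : ℕ)) := by
  let σ : Equiv.Perm (Fin n) :=
    Equiv.ofBijective _ (Finite.injective_iff_bijective.mp (stairReindex_injective hn))
  have hσ : permCode w ∘ σ = fun i : Fin n => j - (i : ℕ) := by
    funext i
    change permCode w (stairReindex hn i) = j - i
    unfold stairReindex
    split_ifs with hij hi2j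
    · rw [permCode_eq_of_stairInversion hw hn (k := i + 1) (by omega) (by dsimp only; omega)]
      omega
    all_goals
      rw [permCode_eq_zero_of_stairInversion hw fun k _ _ h => by dsimp only at h; omega]
      omega
  exact hσ ▸ (σ.ofFn_comp_perm (permCode w)).symm

lemma isStairInversion_iff {j n : ℕ} (hn : n = 3 * j - 1) {u : Equiv.Perm (Fin n)}
    (h1 : ∀ i : Fin n, (i : ℕ) + 1 ≤ j - 1 → (u i : ℕ) + 1 = (i : ℕ) + 1)
    (h2 : ∀ k, 1 ≤ k → k ≤ j → ∀ i : Fin n, (i : ℕ) + 1 = j - 1 + 2 * k - 1 →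
      (u i : ℕ) + 1 = 2 * j - 1 + k)
    (h3 : ∀ k, 1 ≤ k → k ≤ j → ∀ i : Fin n, (i : ℕ) + 1 = j - 1 + 2 * k →
      (u i : ℕ) + 1 = j - 1 + k) (a b : Fin n) :
    a < b ∧ u b < u a ↔ IsStairInversion j a b := by
  have hval : ∀ i : Fin n, ((i : ℕ) + 1 < j ∧ (u i : ℕ) = i) ∨
      (∃ k, 1 ≤ k ∧ k ≤ j ∧ (i : ℕ) + 3 = j + 2 * k ∧ (u i : ℕ) + 2 = 2 * j + k) ∨
      (∃ k, 1 ≤ k ∧ k ≤ j ∧ (i : ℕ) + 2 = j + 2 * k ∧ (u i : ℕ) + 2 = j + k) := by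
    intro i
    have := i.2
    rcases Nat.lt_or_ge ((i : ℕ) + 1) j with h | h
    · exact Or.inl ⟨h, by have := h1 i (by omega); omega⟩
    rcases Nat.even_or_odd ((i : ℕ) + 1 - j) with ⟨m, hm⟩ | ⟨m, hm⟩
    · exact Or.inr (Or.inl ⟨m + 1, by omega, by omega, by omega,
        by have := h2 (m + 1) (by omega) (by omega) i (by omega); omega⟩)
    · exact Or.inr (Or.inr ⟨m + 1, by omega, by omega, by omega,
        by have := h3 (m + 1) (by omega) (by omega) i (by omega); omega⟩)
  rw [Fin.lt_def, Fin.lt_def]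
  constructor
  · rintro ⟨hab, hu⟩
    rcases hval a with ⟨ha, hua⟩ | ⟨k, hk, hkj, ha, hua⟩ | ⟨k, hk, hkj, ha, hua⟩ <;>
      rcases hval b with ⟨hb, hub⟩ | ⟨k', hk', hk'j, hb, hub⟩ | ⟨k', hk', hk'j, hb, hub⟩ <;>
      first
        | omega
        | exact ⟨k, k', hk, by omega, hk'j, ha, hb⟩
  · rintro ⟨k, k', hk, hkk', hk'j, ha, hb⟩
    have hua := h2 k hk (by omega) a (by omega)
    have hub := h3 k' (by omega) hk'j b (by omega)
    omega

theorem explicit_vexillary_staircase_general (j n : ℕ) (hn : n = 3 * j - 1)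
    (u : Equiv.Perm (Fin n))
    (h1 : ∀ i : Fin n, (i : ℕ) + 1 ≤ j - 1 → (u i : ℕ) + 1 = (i : ℕ) + 1)
    (h2 : ∀ k, 1 ≤ k → k ≤ j → ∀ i : Fin n, (i : ℕ) + 1 = j - 1 + 2 * k - 1 →
      (u i : ℕ) + 1 = 2 * j - 1 + k)
    (h3 : ∀ k, 1 ≤ k → k ≤ j → ∀ i : Fin n, (i : ℕ) + 1 = j - 1 + 2 * k →
      (u i : ℕ) + 1 = j - 1 + k) :
    AvoidsPattern u pattern2143 ∧
    (∀ k, 1 ≤ k → k ≤ j → ∀ i : Fin n, (i : ℕ) + 1 = j + 2 * k - 2 →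
      permCode u i = j + 1 - k) ∧
    (∀ i : Fin n, (∀ k, 1 ≤ k → k ≤ j → (i : ℕ) + 1 ≠ j + 2 * k - 2) →
      permCode u i = 0) ∧
    sortedCode u = List.ofFn (fun i : Fin n => j - (i : ℕ)) ∧
    permLength u = j * (j + 1) / 2 := by
  have hw := isStairInversion_iff hn h1 h2 h3
  have hcode := ofFn_permCode_perm_of_stairInversion hw hn
  refine ⟨avoidsPattern_2143_of_stairInversion hw,
    fun k hk _ i hi => permCode_eq_of_stairInversion hw hn hk (by omega),
    fun i hi => permCode_eq_zero_of_stairInversion hw fun k hk hkj h => hi k hk hkj (by omega),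
    sortedCode_eq_of_perm hcode ?_, ?_⟩
  · exact List.pairwise_ofFn.mpr fun a b hab => Nat.sub_le_sub_left (Fin.lt_def.mp hab).le j
  · rw [permLength_eq_sum_permCode, ← List.sum_ofFn, hcode.sum_eq, List.sum_ofFn,
      Fin.sum_univ_eq_sum_range (fun i => j - i), sum_range_tsub_of_le (by omega)]

/-- For `j ≥ 1` and `n = 3j - 1`, the permutation `u` of `{1,…,n}` (written 1-based via
`(i : ℕ) + 1` for positions and `(u i : ℕ) + 1` for values) defined by `u(m) = m` for
`1 ≤ m ≤ j-1`, `u(j-1+2k-1) = 2j-1+k` and `u(j-1+2k) = j-1+k` for `1 ≤ k ≤ j`,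
avoids `2143`; its code has nonzero entries exactly `c_{j-2+2k} = j+1-k` for `k = 1,…,j`;
its sorted code is the staircase partition `(j, j-1, …, 1)`; and `ℓ(u) = j(j+1)/2`. -/
theorem explicit_vexillary_staircase (j n : ℕ) (hj : 1 ≤ j) (hn : n = 3 * j - 1)
    (u : Equiv.Perm (Fin n))
    (h1 : ∀ i : Fin n, (i : ℕ) + 1 ≤ j - 1 → (u i : ℕ) + 1 = (i : ℕ) + 1)
    (h2 : ∀ k, 1 ≤ k → k ≤ j → ∀ i : Fin n, (i : ℕ) + 1 = j - 1 + 2 * k - 1 →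
      (u i : ℕ) + 1 = 2 * j - 1 + k)
    (h3 : ∀ k, 1 ≤ k → k ≤ j → ∀ i : Fin n, (i : ℕ) + 1 = j - 1 + 2 * k →
      (u i : ℕ) + 1 = j - 1 + k) :
    AvoidsPattern u pattern2143 ∧
    (∀ k, 1 ≤ k → k ≤ j → ∀ i : Fin n, (i : ℕ) + 1 = j + 2 * k - 2 →
      permCode u i = j + 1 - k) ∧
    (∀ i : Fin n, (∀ k, 1 ≤ k → k ≤ j → (i : ℕ) + 1 ≠ j + 2 * k - 2) →
      permCode u i = 0) ∧
    sortedCode u = List.ofFn (fun i : Fin n => j - (i : ℕ)) ∧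
    permLength u = j * (j + 1) / 2 :=
  explicit_vexillary_staircase_general j n hn u h1 h2 h3
end

section
/- A permutation of {1,…,n} is uniquely determined by the values of its rank matrix on its essential set: if v and w are permutations of {1,…,n} with E(v) = E(w) and r_{ij}(v) = r_{ij}(w) for every (i,j) ∈ E(w), then v = w. -/
open Finset

/-- The rank matrix of `w` (given at natural-number coordinates): `r i j` = the number of
`a ≤ i` with `w a ≤ j`. -/
def rankMatrix {n : ℕ} (w : Equiv.Perm (Fin n)) (i j : ℕ) : ℕ :=
  ((univ : Finset (Fin n)).filter (fun a : Fin n => (a : ℕ) ≤ i ∧ (w a : ℕ) ≤ j)).card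

/-!
Let `a₀` be the first position where `v` and `w` differ, say `w a₀ < v a₀`. Then `(a₀, w a₀)`
lies in `D(v)`, and there `r(w)` exceeds `r(v)` by one, the rows above `a₀` being the same.
Walking right or down inside `D(v)` until an essential cell `(I, J)` of `v` is reached leaves
`r(v)` unchanged (the row or column entered has its `1` beyond the walk), while `r(w)` can only
grow. Hence `r(w) > r(v)` at a cell of `E(v) = E(w)`.
-/

section

variable {n : ℕ}

theorem rankMatrix_mono (w : Equiv.Perm (Fin n)) {i j I J : ℕ} (hI : i ≤ I) (hJ : j ≤ J) :
    rankMatrix w i j ≤ rankMatrix w I J :=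
  card_le_card fun a ha => by
    simp only [mem_filter, mem_univ, true_and] at ha ⊢
    omega

theorem rankMatrix_succ_right_of_inRothe {w : Equiv.Perm (Fin n)} {i j : ℕ}
    (h : InRothe w i (j + 1)) :
    rankMatrix w i (j + 1) = rankMatrix w i j := by
  obtain ⟨-, hj, -, hinv⟩ := h
  refine congrArg card (filter_congr fun a _ => ?_)
  have : (a : ℕ) ≤ i → (w a : ℕ) ≠ j + 1 := fun ha hwa => by
    rw [Equiv.Perm.inv_eq_iff_eq.2 (Fin.ext hwa.symm : (⟨j + 1, hj⟩ : Fin n) = w a)] at hinv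
    omega
  omega

theorem rankMatrix_succ_left_of_inRothe {w : Equiv.Perm (Fin n)} {i j : ℕ}
    (h : InRothe w (i + 1) j) :
    rankMatrix w (i + 1) j = rankMatrix w i j := by
  obtain ⟨hi, -, hw, -⟩ := h
  refine congrArg card (filter_congr fun a _ => ?_)
  have : (w a : ℕ) ≤ j → (a : ℕ) ≠ i + 1 := fun hwa ha => by
    rw [show a = ⟨i + 1, hi⟩ from Fin.ext ha] at hwa
    omega
  omega

theorem exists_inEssential_rankMatrix_eq {w : Equiv.Perm (Fin n)} {i j : ℕ}
    (h : InRothe w i j) :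
    ∃ I J, i ≤ I ∧ j ≤ J ∧ InEssential w I J ∧ rankMatrix w I J = rankMatrix w i j := by
  by_cases hright : InRothe w i (j + 1)
  · obtain ⟨I, J, hI, hJ, hess, hrk⟩ := exists_inEssential_rankMatrix_eq hright
    exact ⟨I, J, hI, by omega, hess, hrk.trans (rankMatrix_succ_right_of_inRothe hright)⟩
  by_cases hdown : InRothe w (i + 1) j
  · obtain ⟨I, J, hI, hJ, hess, hrk⟩ := exists_inEssential_rankMatrix_eq hdown
    exact ⟨I, J, by omega, hJ, hess, hrk.trans (rankMatrix_succ_left_of_inRothe hdown)⟩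
  exact ⟨i, j, le_rfl, le_rfl, ⟨h, hdown, hright⟩, rfl⟩
termination_by (n - i) + (n - j)
decreasing_by
  all_goals obtain ⟨_, _, _⟩ := h
  all_goals omega

theorem rankMatrix_le_of_inRothe {v w : Equiv.Perm (Fin n)}
    (hess : ∀ I J, InEssential v I J → rankMatrix w I J ≤ rankMatrix v I J)
    {i j : ℕ} (h : InRothe v i j) : rankMatrix w i j ≤ rankMatrix v i j := by
  obtain ⟨I, J, hI, hJ, hvIJ, hrk⟩ := exists_inEssential_rankMatrix_eq h
  calc rankMatrix w i j ≤ rankMatrix w I J := rankMatrix_mono w hI hJ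
    _ ≤ rankMatrix v I J := hess I J hvIJ
    _ = rankMatrix v i j := hrk

theorem rankMatrix_eq_card_lt_add (w : Equiv.Perm (Fin n)) (a₀ : Fin n) (j : ℕ) :
    rankMatrix w a₀ j = #{a | a < a₀ ∧ (w a : ℕ) ≤ j} + if (w a₀ : ℕ) ≤ j then 1 else 0 := by
  have hsplit : univ.filter (fun a : Fin n => (a : ℕ) ≤ a₀ ∧ (w a : ℕ) ≤ j) =
      univ.filter (fun a => a < a₀ ∧ (w a : ℕ) ≤ j) ∪
        ({a₀} : Finset (Fin n)).filter (fun a => (w a : ℕ) ≤ j) := by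
    ext a
    simp only [mem_union, mem_filter, mem_univ, mem_singleton, true_and, Fin.lt_def, Fin.ext_iff]
    omega
  rw [rankMatrix, hsplit, card_union_of_disjoint, card_filter _ {a₀}, sum_singleton]
  simp only [disjoint_left, mem_filter, mem_univ, true_and, mem_singleton]
  rintro a ⟨ha, -⟩ ⟨rfl, -⟩
  exact lt_irrefl a ha

theorem inRothe_and_rankMatrix_lt_of_eq_of_lt {v w : Equiv.Perm (Fin n)} {a₀ : Fin n}
    (hagree : ∀ a < a₀, v a = w a) (hlt : w a₀ < v a₀) :
    InRothe v a₀ (w a₀) ∧ rankMatrix v a₀ (w a₀) < rankMatrix w a₀ (w a₀) := by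
  have hprefix : #{a | a < a₀ ∧ (v a : ℕ) ≤ w a₀} = #{a | a < a₀ ∧ (w a : ℕ) ≤ w a₀} :=
    congrArg card (filter_congr fun a _ => and_congr_right fun ha => by rw [hagree a ha])
  refine ⟨⟨a₀.isLt, (w a₀).isLt, hlt, ?_⟩, ?_⟩
  · change a₀ < v⁻¹ (w a₀)
    refine lt_of_not_ge fun hle => hlt.ne ?_
    have hv : v (v⁻¹ (w a₀)) = w a₀ := v.apply_symm_apply _
    rcases hle.lt_or_eq with hbefore | hat
    · exact absurd (w.injective ((hagree _ hbefore).symm.trans hv)) hbefore.ne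
    · rw [← hv, hat]
  · rw [rankMatrix_eq_card_lt_add, rankMatrix_eq_card_lt_add, hprefix, if_pos le_rfl,
      if_neg (show ¬ (v a₀ : ℕ) ≤ w a₀ from hlt.not_ge)]
    exact Nat.lt_succ_self _

end

/-- A permutation is uniquely determined by the values of its rank matrix on its essential
set: if `E(v) = E(w)` and the rank matrices of `v` and `w` agree on `E(w)`, then `v = w`. -/
theorem perm_eq_of_essential_and_rank {n : ℕ} (v w : Equiv.Perm (Fin n))
    (hE : ∀ i j : ℕ, InEssential v i j ↔ InEssential w i j)
    (hr : ∀ i j : ℕ, InEssential w i j → rankMatrix v i j = rankMatrix w i j) :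
    v = w := by
  by_contra hne
  obtain ⟨a₀, hdiff, hmin⟩ := WellFounded.has_min wellFounded_lt {a | v a ≠ w a}
    (not_forall.1 fun h => hne (Equiv.ext h))
  have hagree : ∀ a < a₀, v a = w a := fun a ha => not_not.1 fun h => hmin a h ha
  rcases lt_or_gt_of_ne hdiff with hvw | hwv
  · obtain ⟨hD, hrk⟩ :=
      inRothe_and_rankMatrix_lt_of_eq_of_lt (fun a ha => (hagree a ha).symm) hvw
    exact (rankMatrix_le_of_inRothe (fun I J h => (hr I J h).le) hD).not_gt hrk
  · obtain ⟨hD, hrk⟩ := inRothe_and_rankMatrix_lt_of_eq_of_lt hagree hwv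
    exact (rankMatrix_le_of_inRothe (fun I J h => (hr I J ((hE I J).1 h)).ge) hD).not_gt hrk
end
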